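/- Let Γ ⊆ D be the subalgebra generated by Y₁^{±1},…,Y_N^{±1} and the elements s_w for w ∈ S_N. For a K[S_N]-module S, let 1^N ⊠ S denote the Γ-module with underlying space S on which each s_w acts by w and each Y_i acts by the identity. If S is a simple K[S_N]-module, then the induced module D ⊗_Γ (1^N ⊠ S) is a simple left D-module. -/

import Mathlib

/-!
Statement 12: Let `K` be a field of characteristic zero, `q ∈ K^×` not a root
of unity, and `D = D_q(H) # S_N` the smash product of the quantum torus with
the symmetric group.  Let `Γ ⊆ D` be the subalgebra generated by `Y_i^{±1}` and
the `s_w`, and for a `K[S_N]`-module `S` let `1^N ⊠ S` be the `Γ`-module with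
underlying space `S` on which each `s_w` acts by `w` and each `Y_i` by the
identity.  If `S` is a simple `K[S_N]`-module, then `D ⊗_Γ (1^N ⊠ S)` is a
simple left `D`-module.

The relative tensor product `D ⊗_Γ (1^N ⊠ S)` is realized as the quotient of
`D ⊗_K S` by the `D`-submodule spanned by the elements
`d·γ ⊗ s − d ⊗ γ·s` for `γ` ranging over the generators `Y_i`, `Y_i^{-1}`,
`s_w` of `Γ`.  A `K[S_N]`-module is a `K`-vector space with a `K`-linear action
of `S_N`; it is simple when it is nonzero and has no invariant `K`-submodules
other than `⊥` and `⊤`.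
-/

noncomputable section

/-- Generators of the smash product `D = D_q(H) # S_N`. -/
inductive SGen (N : ℕ) : Type
  | X : Fin N → SGen N
  | Xinv : Fin N → SGen N
  | Y : Fin N → SGen N
  | Yinv : Fin N → SGen N
  | S : Equiv.Perm (Fin N) → SGen N

/-- The generator embedding into the free algebra. -/
def sg (K : Type) [Field K] {N : ℕ} (g : SGen N) : FreeAlgebra K (SGen N) :=
  FreeAlgebra.ι K g

/-- The defining relations of the smash product `D_q(H) # S_N`. -/
inductive SRel (K : Type) [Field K] (N : ℕ) (q : Kˣ) :
    FreeAlgebra K (SGen N) → FreeAlgebra K (SGen N) → Prop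
  | XX (i j : Fin N) :
      SRel K N q (sg K (.X i) * sg K (.X j)) (sg K (.X j) * sg K (.X i))
  | XXinv (i : Fin N) : SRel K N q (sg K (.X i) * sg K (.Xinv i)) 1
  | XinvX (i : Fin N) : SRel K N q (sg K (.Xinv i) * sg K (.X i)) 1
  | YY (i j : Fin N) :
      SRel K N q (sg K (.Y i) * sg K (.Y j)) (sg K (.Y j) * sg K (.Y i))
  | YYinv (i : Fin N) : SRel K N q (sg K (.Y i) * sg K (.Yinv i)) 1
  | YinvY (i : Fin N) : SRel K N q (sg K (.Yinv i) * sg K (.Y i)) 1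
  | YXne (i j : Fin N) (h : i ≠ j) :
      SRel K N q (sg K (.Y i) * sg K (.X j)) (sg K (.X j) * sg K (.Y i))
  | YXeq (i : Fin N) :
      SRel K N q (sg K (.Y i) * sg K (.X i)) ((q : K) • (sg K (.X i) * sg K (.Y i)))
  | Smul (w w' : Equiv.Perm (Fin N)) :
      SRel K N q (sg K (.S w) * sg K (.S w')) (sg K (.S (w * w')))
  | Sone : SRel K N q (sg K (.S 1)) 1
  | SX (w : Equiv.Perm (Fin N)) (i : Fin N) :
      SRel K N q (sg K (.S w) * sg K (.X i)) (sg K (.X (w i)) * sg K (.S w))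
  | SY (w : Equiv.Perm (Fin N)) (i : Fin N) :
      SRel K N q (sg K (.S w) * sg K (.Y i)) (sg K (.Y (w i)) * sg K (.S w))

/-- The smash product `D = D_q(H) # S_N`, presented by generators and relations. -/
abbrev SmashD (K : Type) [Field K] (N : ℕ) (q : Kˣ) := RingQuot (SRel K N q)

/-- The element `Y_i` of `D`. -/
def Ye (K : Type) [Field K] {N : ℕ} (q : Kˣ) (i : Fin N) : SmashD K N q :=
  RingQuot.mkAlgHom K (SRel K N q) (sg K (.Y i))

/-- The element `Y_i^{-1}` of `D`. -/
def YeInv (K : Type) [Field K] {N : ℕ} (q : Kˣ) (i : Fin N) : SmashD K N q :=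
  RingQuot.mkAlgHom K (SRel K N q) (sg K (.Yinv i))

/-- The element `s_w` of `D`. -/
def Se (K : Type) [Field K] {N : ℕ} (q : Kˣ) (w : Equiv.Perm (Fin N)) : SmashD K N q :=
  RingQuot.mkAlgHom K (SRel K N q) (sg K (.S w))

open scoped TensorProduct

/-- The `D`-submodule of `D ⊗_K S` spanned by the relations
`d·γ ⊗ s − d ⊗ γ·s`, for `γ` among the generators `Y_i`, `Y_i^{-1}`, `s_w` of
`Γ` acting on `1^N ⊠ S` (the `Y_i^{±1}` acting by the identity, `s_w` by `w`).
The quotient by it is the relative tensor product `D ⊗_Γ (1^N ⊠ S)`. -/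
def indRel (K : Type) [Field K] (N : ℕ) (q : Kˣ) (S : Type) [AddCommGroup S]
    [Module K S] [DistribMulAction (Equiv.Perm (Fin N)) S]
    [SMulCommClass (Equiv.Perm (Fin N)) K S] :
    Submodule (SmashD K N q) (SmashD K N q ⊗[K] S) :=
  Submodule.span (SmashD K N q)
    ({x | ∃ (d : SmashD K N q) (i : Fin N) (s : S),
        x = (d * Ye K q i) ⊗ₜ[K] s - d ⊗ₜ[K] s} ∪
     {x | ∃ (d : SmashD K N q) (i : Fin N) (s : S),
        x = (d * YeInv K q i) ⊗ₜ[K] s - d ⊗ₜ[K] s} ∪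
     {x | ∃ (d : SmashD K N q) (w : Equiv.Perm (Fin N)) (s : S),
        x = (d * Se K q w) ⊗ₜ[K] s - d ⊗ₜ[K] (w • s)})

/-!
Write `L` for the space of `S`-valued Laurent polynomials `⊕_{a ∈ ℤ^N} X^a ⊗ S`, made into a
`D`-module by letting `X^b` shift degrees, `Y_i` act on `X^a ⊗ S` by the scalar `q^{a_i}` and `s_w`
permute both the exponent and `S`. Sending `d ⊗ s` to `d · (1 ⊗ s)` identifies
`D ⊗_Γ (1^N ⊠ S)` with `L`, the inverse sending `X^a ⊗ s` to the class of `X^a ⊗ s`.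
Since `q` is not a root of unity, the eigenvalues `q^{a_i}` of the `Y_i` separate the degrees, so
applying some `Y_i - q^{b_i}` to a nonzero element of a submodule shortens its support until a
single monomial `X^a ⊗ s` is left. The `X`'s move it to degree `0`, and the simplicity of `S`
then gives all of `L`.
-/

theorem map_inv_smul_of_map_smul {A M M' : Type*} [Monoid A] [MulAction A M] [MulAction A M']
    {f : M → M'} {u : Aˣ} (h : ∀ m, f ((u : A) • m) = (u : A) • f m) (m : M) :
    f ((↑u⁻¹ : A) • m) = (↑u⁻¹ : A) • f m := by
  rw [← Units.smul_def, ← inv_smul_smul u (f _), Units.smul_def u, ← h, ← Units.smul_def,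
    smul_inv_smul, Units.smul_def]

theorem zpow_injective_of_pow_ne_one {M : Type*} [Monoid M] {u : Mˣ}
    (h : ∀ m : ℕ, m ≠ 0 → (u : M) ^ m ≠ 1) : Function.Injective fun n : ℤ => u ^ n :=
  injective_zpow_iff_not_isOfFinOrder.2 fun hu => by
    obtain ⟨n, hn, hun⟩ := isOfFinOrder_iff_pow_eq_one.1 hu
    exact h n hn.ne' (by rw [← Units.val_pow_eq_pow_val, hun, Units.val_one])

namespace Finsupp

variable (R : Type*) [CommSemiring R] (M : Type*) [AddCommMonoid M] [Module R M] {α : Type*}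

def diagEnd : (α → R) →* Module.End R (α →₀ M) where
  toFun f := lsum R fun a => f a • lsingle a
  map_one' := by ext; simp
  map_mul' f g := by ext; simp [mul_smul]

def shiftEnd [AddCommMonoid α] : Multiplicative α →* Module.End R (α →₀ M) where
  toFun v := lmapDomain M R (· + v.toAdd)
  map_one' := by ext; simp
  map_mul' v w := by ext; simp [add_assoc, add_comm w.toAdd]

variable {R M}

@[simp]
theorem diagEnd_single (f : α → R) (a : α) (x : M) :
    diagEnd R M f (single a x) = f a • single a x := by
  simp [diagEnd]

theorem diagEnd_apply (f : α → R) (m : α →₀ M) (a : α) : diagEnd R M f m a = f a • m a := by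
  classical
  induction m using Finsupp.induction_linear with
  | zero => simp
  | add m m' hm hm' => simp [hm, hm']
  | single b x => by_cases h : b = a <;> simp [h]

@[simp]
theorem shiftEnd_single [AddCommMonoid α] (v : Multiplicative α) (a : α) (x : M) :
    shiftEnd R M v (single a x) = single (a + v.toAdd) x := by
  simp [shiftEnd]

end Finsupp

namespace SmashD

section Generators

variable (K : Type) [Field K] {N : ℕ} (q : Kˣ)

def Xe (i : Fin N) : SmashD K N q := RingQuot.mkAlgHom K (SRel K N q) (sg K (.X i))

def XeInv (i : Fin N) : SmashD K N q := RingQuot.mkAlgHom K (SRel K N q) (sg K (.Xinv i))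

def unitX (i : Fin N) : (SmashD K N q)ˣ where
  val := Xe K q i
  inv := XeInv K q i
  val_inv := by simpa [Xe, XeInv] using RingQuot.mkAlgHom_rel K (SRel.XXinv (q := q) i)
  inv_val := by simpa [Xe, XeInv] using RingQuot.mkAlgHom_rel K (SRel.XinvX (q := q) i)

def unitY (i : Fin N) : (SmashD K N q)ˣ where
  val := Ye K q i
  inv := YeInv K q i
  val_inv := by simpa [Ye, YeInv] using RingQuot.mkAlgHom_rel K (SRel.YYinv (q := q) i)
  inv_val := by simpa [Ye, YeInv] using RingQuot.mkAlgHom_rel K (SRel.YinvY (q := q) i)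

variable {K q}

theorem Se_mul_Se (w w' : Equiv.Perm (Fin N)) : Se K q w * Se K q w' = Se K q (w * w') := by
  simpa [Se] using RingQuot.mkAlgHom_rel K (SRel.Smul (q := q) w w')

theorem Se_one : Se K q (1 : Equiv.Perm (Fin N)) = 1 := by
  simpa [Se] using RingQuot.mkAlgHom_rel K (SRel.Sone (q := q) (N := N))

variable (K q) in
def unitS (w : Equiv.Perm (Fin N)) : (SmashD K N q)ˣ where
  val := Se K q w
  inv := Se K q w⁻¹
  val_inv := by rw [Se_mul_Se, mul_inv_cancel, Se_one]
  inv_val := by rw [Se_mul_Se, inv_mul_cancel, Se_one]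

theorem commute_unitX (i j : Fin N) : Commute (unitX K q i) (unitX K q j) :=
  Units.ext <| by simpa [unitX, Xe] using RingQuot.mkAlgHom_rel K (SRel.XX (q := q) i j)

theorem semiconjBy_unitS_unitX (w : Equiv.Perm (Fin N)) (i : Fin N) :
    SemiconjBy (unitS K q w) (unitX K q i) (unitX K q (w i)) :=
  Units.ext <| by
    simpa [unitS, unitX, Se, Xe] using RingQuot.mkAlgHom_rel K (SRel.SX (q := q) w i)

variable (K q) in
def scalar (c : Kˣ) : (SmashD K N q)ˣ := Units.map (algebraMap K (SmashD K N q)).toMonoidHom c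

theorem commute_scalar (c : Kˣ) (u : (SmashD K N q)ˣ) : Commute (scalar K q c) u :=
  Units.ext (Algebra.commutes _ _)

theorem semiconjBy_unitY_unitX (i j : Fin N) :
    SemiconjBy (unitY K q i) (unitX K q j)
      (scalar K q (if i = j then q else 1) * unitX K q j) := by
  refine Units.ext ?_
  by_cases hij : i = j
  · subst hij
    simpa [unitY, unitX, scalar, Ye, Xe, Algebra.smul_def, mul_assoc]
      using RingQuot.mkAlgHom_rel K (SRel.YXeq (q := q) i)
  · simpa [unitY, unitX, scalar, Ye, Xe, hij]
      using RingQuot.mkAlgHom_rel K (SRel.YXne (q := q) i j hij)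

variable (K q) in
def Xpow (a : Fin N → ℤ) : (SmashD K N q)ˣ :=
  MonoidHom.noncommPiCoprod (fun i => zpowersHom _ (unitX K q i))
    (fun i j _ _ _ => (commute_unitX i j).zpow_zpow _ _)
    (fun i => Multiplicative.ofAdd (a i))

theorem Xpow_zero : Xpow K q (0 : Fin N → ℤ) = 1 := map_one _

theorem Xpow_add (a b : Fin N → ℤ) : Xpow K q (a + b) = Xpow K q a * Xpow K q b :=
  map_mul (MonoidHom.noncommPiCoprod _ _) (fun i => Multiplicative.ofAdd (a i))
    (fun i => Multiplicative.ofAdd (b i))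

theorem Xpow_single (i : Fin N) (n : ℤ) : Xpow K q (Pi.single i n) = unitX K q i ^ n := by
  have : (fun j => Multiplicative.ofAdd ((Pi.single i n : Fin N → ℤ) j))
      = Pi.mulSingle i (.ofAdd n) := by
    ext j
    by_cases hj : j = i <;> simp [hj]
  rw [Xpow, this]
  exact MonoidHom.noncommPiCoprod_mulSingle _ _ _

theorem semiconjBy_unitS_Xpow (w : Equiv.Perm (Fin N)) (a : Fin N → ℤ) :
    SemiconjBy (unitS K q w) (Xpow K q a) (Xpow K q (a ∘ ⇑w⁻¹)) := by
  induction a using Pi.single_induction with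
  | zero => simp [Xpow_zero]
  | add a b ha hb => simpa [Xpow_add, Pi.add_comp] using ha.mul_right hb
  | single i n =>
    have hw : (Pi.single i n : Fin N → ℤ) ∘ ⇑w⁻¹ = Pi.single (w i) n :=
      Pi.single_comp_equiv _ _ _
    rw [hw, Xpow_single, Xpow_single]
    exact (semiconjBy_unitS_unitX w i).zpow_right n

theorem semiconjBy_unitY_Xpow (i : Fin N) (a : Fin N → ℤ) :
    SemiconjBy (unitY K q i) (Xpow K q a) (scalar K q (q ^ a i) * Xpow K q a) := by
  induction a using Pi.single_induction with
  | zero => simp [Xpow_zero, scalar]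
  | add a b ha hb =>
    have hab : scalar K q (q ^ a i) * Xpow K q a * (scalar K q (q ^ b i) * Xpow K q b)
        = scalar K q (q ^ (a + b) i) * Xpow K q (a + b) := by
      rw [mul_assoc, ← mul_assoc (Xpow K q a), ← (commute_scalar _ _).eq]
      simp [Xpow_add, zpow_add, scalar, mul_assoc]
    simpa [Xpow_add, hab] using ha.mul_right hb
  | single j n =>
    have hc : scalar K q (q ^ (Pi.single j n : Fin N → ℤ) i)
        = (scalar K q (if i = j then q else 1) ^ n : (SmashD K N q)ˣ) := by
      by_cases hij : i = j
      · subst hij; simp [scalar]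
      · simp [scalar, hij]
    rw [Xpow_single, hc, ← (commute_scalar _ _).mul_zpow]
    exact (semiconjBy_unitY_unitX i j).zpow_right n

end Generators

section LaurentModule

open Finsupp TensorProduct

variable (K : Type) [Field K] (N : ℕ) (q : Kˣ) (S : Type) [AddCommGroup S] [Module K S]
  [DistribMulAction (Equiv.Perm (Fin N)) S] [SMulCommClass (Equiv.Perm (Fin N)) K S]

def IsPermIrreducible : Prop :=
  ∀ p : Submodule K S, (∀ (w : Equiv.Perm (Fin N)) (x : S), x ∈ p → w • x ∈ p) → p = ⊥ ∨ p = ⊤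

/-- `single a s` stands for `X^a ⊗ s`. -/
abbrev LaurentModule := (Fin N → ℤ) →₀ S

def permEnd : Equiv.Perm (Fin N) →* Module.End K (LaurentModule N S) where
  toFun w := lsum K fun a => lsingle (a ∘ ⇑w⁻¹) ∘ₗ DistribSMul.toLinearMap K S w
  map_one' := by ext; simp
  map_mul' w w' := by ext; simp [mul_smul, Function.comp_assoc]

variable {K N S} in
@[simp]
theorem permEnd_single (w : Equiv.Perm (Fin N)) (a : Fin N → ℤ) (s : S) :
    permEnd K N S w (single a s) = single (a ∘ ⇑w⁻¹) (w • s) := by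
  simp [permEnd]

def genEnd : SGen N → Module.End K (LaurentModule N S)
  | .X i => shiftEnd K S (.ofAdd (Pi.single i 1))
  | .Xinv i => shiftEnd K S (.ofAdd (-Pi.single i 1))
  | .Y i => diagEnd K S fun a => ((q ^ a i : Kˣ) : K)
  | .Yinv i => diagEnd K S fun a => ((q ^ (-a i) : Kˣ) : K)
  | .S w => permEnd K N S w

theorem genEnd_rel ⦃x y : FreeAlgebra K (SGen N)⦄ (h : SRel K N q x y) :
    FreeAlgebra.lift K (genEnd K N q S) x = FreeAlgebra.lift K (genEnd K N q S) y := by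
  have hq (n : ℤ) : (q : K) ^ n ≠ 0 := zpow_ne_zero n q.ne_zero
  induction h <;> refine lhom_ext fun a s => ?_ <;> simp [sg, genEnd]
  case XX => rw [add_right_comm]
  case YY => rw [smul_comm]
  case YYinv => rw [smul_inv_smul₀ (hq _)]
  case YinvY => rw [inv_smul_smul₀ (hq _)]
  case YXne i j hij => rw [Pi.single_eq_of_ne hij, add_zero]
  case YXeq => rw [zpow_add_one₀ q.ne_zero, mul_comm, mul_smul]
  case SX w i => rw [Pi.add_comp, ← Equiv.Perm.inv_def, Pi.single_comp_equiv]; rfl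
  case SY => rw [smul_comm]

def laurentRep : SmashD K N q →ₐ[K] Module.End K (LaurentModule N S) :=
  RingQuot.liftAlgHom K ⟨FreeAlgebra.lift K (genEnd K N q S), genEnd_rel K N q S⟩

local instance : Module (SmashD K N q) (LaurentModule N S) :=
  Module.compHom _ (laurentRep K N q S).toRingHom

variable {K N q S}

theorem smul_def (d : SmashD K N q) (m : LaurentModule N S) : d • m = laurentRep K N q S d m := rfl

local instance : IsScalarTower K (SmashD K N q) (LaurentModule N S) :=
  ⟨fun c d m => by simp [smul_def]⟩

theorem laurentRep_mk (g : SGen N) :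
    laurentRep K N q S (RingQuot.mkAlgHom K (SRel K N q) (sg K g)) = genEnd K N q S g := by
  simp [laurentRep, sg]

theorem Ye_smul_apply (i : Fin N) (m : LaurentModule N S) (a : Fin N → ℤ) :
    (Ye K q i • m) a = ((q ^ a i : Kˣ) : K) • m a := by
  rw [smul_def, Ye, laurentRep_mk, genEnd, diagEnd_apply]

theorem Se_smul_single (w : Equiv.Perm (Fin N)) (a : Fin N → ℤ) (s : S) :
    Se K q w • (single a s : LaurentModule N S) = single (a ∘ ⇑w⁻¹) (w • s) := by
  rw [smul_def, Se, laurentRep_mk, genEnd, permEnd_single]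

theorem laurentRep_Xpow (a : Fin N → ℤ) :
    laurentRep K N q S (Xpow K q a) = shiftEnd K S (.ofAdd a) := by
  induction a using Pi.single_induction with
  | zero => simp [Xpow_zero]
  | add a b ha hb => simp [Xpow_add, ha, hb]
  | single i n =>
    have hX : Units.map (laurentRep K N q S).toMonoidHom (unitX K q i)
        = (shiftEnd K S).toHomUnits (.ofAdd (Pi.single i 1)) :=
      Units.ext <| by simp [unitX, Xe, laurentRep_mk, genEnd]
    have h := congrArg Units.val (congrArg (· ^ n) hX)
    simp only [← map_zpow, Units.coe_map, MonoidHom.coe_toHomUnits] at h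
    rw [← ofAdd_zsmul, ← Pi.single_smul, smul_eq_mul, mul_one] at h
    rw [Xpow_single]
    exact h

theorem Xpow_smul_single (a b : Fin N → ℤ) (s : S) :
    (Xpow K q a : SmashD K N q) • (single b s : LaurentModule N S) = single (b + a) s := by
  rw [smul_def, laurentRep_Xpow, shiftEnd_single, toAdd_ofAdd]

theorem Ye_smul_single (i : Fin N) (a : Fin N → ℤ) (s : S) :
    Ye K q i • (single a s : LaurentModule N S) = ((q ^ a i : Kˣ) : K) • single a s := by
  rw [smul_def, Ye, laurentRep_mk, genEnd, diagEnd_single]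

theorem YeInv_smul_single (i : Fin N) (a : Fin N → ℤ) (s : S) :
    YeInv K q i • (single a s : LaurentModule N S) = ((q ^ (-a i) : Kˣ) : K) • single a s := by
  rw [smul_def, YeInv, laurentRep_mk, genEnd, diagEnd_single]


variable (K N q S) in
def evalTensor : SmashD K N q ⊗[K] S →ₗ[SmashD K N q] LaurentModule N S :=
  AlgebraTensorModule.lift (LinearMap.toSpanSingleton _ _ (lsingle 0))

@[simp]
theorem evalTensor_tmul (d : SmashD K N q) (s : S) :
    evalTensor K N q S (d ⊗ₜ s) = d • single 0 s := rfl

theorem indRel_le_ker_evalTensor : indRel K N q S ≤ LinearMap.ker (evalTensor K N q S) := by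
  rw [indRel, Submodule.span_le]
  rintro x (⟨⟨d, i, s, rfl⟩ | ⟨d, i, s, rfl⟩⟩ | ⟨d, w, s, rfl⟩) <;>
    simp [mul_smul, Ye_smul_single, YeInv_smul_single, Se_smul_single]

-- `M ⧸ p` does not find the `HasQuotient` instance here, hence the spelling of the statement.
variable (K N q S) in
abbrev InducedModule :=
  @HasQuotient.Quotient _ _
    (@Submodule.hasQuotient (SmashD K N q) (SmashD K N q ⊗[K] S) _ _ _) (indRel K N q S)

-- Elaborating `liftQ` with these arguments left implicit times out.
variable (K N q S) in
def evalInduced : InducedModule K N q S →ₗ[SmashD K N q] LaurentModule N S :=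
  (@Submodule.liftQ (SmashD K N q) (SmashD K N q ⊗[K] S) _ _ _ (indRel K N q S) (SmashD K N q)
    (LaurentModule N S) _ _ _ (RingHom.id _) (evalTensor K N q S) indRel_le_ker_evalTensor :)

theorem evalInduced_mk (t : SmashD K N q ⊗[K] S) :
    evalInduced K N q S (Submodule.Quotient.mk t) = evalTensor K N q S t := rfl

variable (K N q S) in
def ofLaurent : LaurentModule N S →+ InducedModule K N q S :=
  liftAddHom fun a =>
    { toFun s := Submodule.Quotient.mk ((Xpow K q a : SmashD K N q) ⊗ₜ[K] s)
      map_zero' := by rw [tmul_zero]; rfl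
      map_add' s t := by rw [tmul_add]; rfl }

theorem ofLaurent_single (a : Fin N → ℤ) (s : S) :
    ofLaurent K N q S (single a s) = Submodule.Quotient.mk ((Xpow K q a : SmashD K N q) ⊗ₜ s) :=
  liftAddHom_apply_single _ _ _

theorem smul_mk_tmul (d d' : SmashD K N q) (s : S) :
    d • (Submodule.Quotient.mk (d' ⊗ₜ[K] s) : InducedModule K N q S)
      = Submodule.Quotient.mk ((d * d') ⊗ₜ[K] s) := by
  rw [← Submodule.Quotient.mk_smul, smul_tmul', smul_eq_mul]

theorem mk_mul_Ye_tmul (d : SmashD K N q) (i : Fin N) (s : S) :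
    (Submodule.Quotient.mk ((d * Ye K q i) ⊗ₜ[K] s) : InducedModule K N q S)
      = Submodule.Quotient.mk (d ⊗ₜ[K] s) :=
  (Submodule.Quotient.eq _).2 <| Submodule.subset_span <| .inl <| .inl ⟨d, i, s, rfl⟩

theorem mk_mul_Se_tmul (d : SmashD K N q) (w : Equiv.Perm (Fin N)) (s : S) :
    (Submodule.Quotient.mk ((d * Se K q w) ⊗ₜ[K] s) : InducedModule K N q S)
      = Submodule.Quotient.mk (d ⊗ₜ[K] (w • s)) :=
  (Submodule.Quotient.eq _).2 <| Submodule.subset_span <| .inr ⟨d, w, s, rfl⟩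

theorem mk_algebraMap_mul_tmul (c : K) (d : SmashD K N q) (s : S) :
    (Submodule.Quotient.mk ((algebraMap K _ c * d) ⊗ₜ[K] s) : InducedModule K N q S)
      = Submodule.Quotient.mk (d ⊗ₜ[K] (c • s)) := by
  rw [← Algebra.smul_def, smul_tmul]

theorem ofLaurent_smul_of_forall_single {d : SmashD K N q}
    (h : ∀ a s, ofLaurent K N q S (d • single a s) = d • ofLaurent K N q S (single a s))
    (m : LaurentModule N S) : ofLaurent K N q S (d • m) = d • ofLaurent K N q S m := by
  induction m using Finsupp.induction_linear with
  | zero => simp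
  | add m m' hm hm' => rw [smul_add, map_add, hm, hm', map_add, smul_add]
  | single a s => exact h a s

theorem ofLaurent_Xpow_smul (b : Fin N → ℤ) (m : LaurentModule N S) :
    ofLaurent K N q S ((Xpow K q b : SmashD K N q) • m)
      = (Xpow K q b : SmashD K N q) • ofLaurent K N q S m := by
  refine ofLaurent_smul_of_forall_single (fun a s => ?_) m
  rw [Xpow_smul_single, ofLaurent_single, ofLaurent_single, smul_mk_tmul, add_comm, Xpow_add,
    Units.val_mul]

theorem ofLaurent_Ye_smul (i : Fin N) (m : LaurentModule N S) :
    ofLaurent K N q S (Ye K q i • m) = Ye K q i • ofLaurent K N q S m := by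
  refine ofLaurent_smul_of_forall_single (fun a s => ?_) m
  have hY : Ye K q i * Xpow K q a = algebraMap K _ (q ^ a i : Kˣ) * Xpow K q a * Ye K q i :=
    congrArg Units.val (semiconjBy_unitY_Xpow i a)
  rw [Ye_smul_single, smul_single, ofLaurent_single, ofLaurent_single, smul_mk_tmul, hY,
    mk_mul_Ye_tmul, mk_algebraMap_mul_tmul]

theorem ofLaurent_Se_smul (w : Equiv.Perm (Fin N)) (m : LaurentModule N S) :
    ofLaurent K N q S (Se K q w • m) = Se K q w • ofLaurent K N q S m := by
  refine ofLaurent_smul_of_forall_single (fun a s => ?_) m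
  have hS : Se K q w * Xpow K q a = Xpow K q (a ∘ ⇑w⁻¹) * Se K q w :=
    congrArg Units.val (semiconjBy_unitS_Xpow w a)
  rw [Se_smul_single, ofLaurent_single, ofLaurent_single, smul_mk_tmul, hS, mk_mul_Se_tmul]

theorem ofLaurent_smul (d : SmashD K N q) (m : LaurentModule N S) :
    ofLaurent K N q S (d • m) = d • ofLaurent K N q S m := by
  obtain ⟨x, rfl⟩ := RingQuot.mkAlgHom_surjective K (SRel K N q) d
  induction x using FreeAlgebra.induction generalizing m with
  | grade0 c =>
    refine ofLaurent_smul_of_forall_single (fun a s => ?_) m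
    rw [AlgHom.commutes, algebraMap_smul, smul_single, ofLaurent_single, ofLaurent_single,
      smul_mk_tmul, ← mk_algebraMap_mul_tmul]
  | grade1 g =>
    cases g with
    | X i =>
      have hX : Xe K q i = Xpow K q (Pi.single i 1) := by simp [Xpow_single, unitX]
      change ofLaurent K N q S (Xe K q i • m) = Xe K q i • _
      rw [hX, ofLaurent_Xpow_smul]
    | Xinv i =>
      have hX : XeInv K q i = Xpow K q (Pi.single i (-1)) := by simp [Xpow_single, unitX]
      change ofLaurent K N q S (XeInv K q i • m) = XeInv K q i • _
      rw [hX, ofLaurent_Xpow_smul]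
    | Y i => exact ofLaurent_Ye_smul i m
    | Yinv i => exact map_inv_smul_of_map_smul (u := unitY K q i) (ofLaurent_Ye_smul i) m
    | S w => exact ofLaurent_Se_smul w m
  | mul x y hx hy => rw [map_mul, mul_smul, mul_smul, hx, hy]
  | add x y hx hy => rw [map_add, add_smul, map_add, hx, hy, add_smul]

theorem evalInduced_ofLaurent (m : LaurentModule N S) :
    evalInduced K N q S (ofLaurent K N q S m) = m := by
  induction m using Finsupp.induction_linear with
  | zero => simp
  | add m m' hm hm' => rw [map_add, map_add, hm, hm']
  | single a s =>
    rw [ofLaurent_single, evalInduced_mk, evalTensor_tmul, Xpow_smul_single, zero_add]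

theorem ofLaurent_evalInduced (x : InducedModule K N q S) :
    ofLaurent K N q S (evalInduced K N q S x) = x := by
  obtain ⟨t, rfl⟩ := Submodule.Quotient.mk_surjective _ x
  rw [evalInduced_mk]
  induction t using TensorProduct.induction_on with
  | zero => simp
  | tmul d s =>
    rw [evalTensor_tmul, ofLaurent_smul, ofLaurent_single, Xpow_zero, Units.val_one,
      smul_mk_tmul, mul_one]
  | add t t' ht ht' => rw [map_add, map_add, ht, ht', Submodule.Quotient.mk_add]

variable (K N q S) in
def inducedEquivLaurent : InducedModule K N q S ≃ₗ[SmashD K N q] LaurentModule N S :=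
  { evalInduced K N q S with
    invFun := ofLaurent K N q S
    left_inv := ofLaurent_evalInduced
    right_inv := evalInduced_ofLaurent }

variable {p : Submodule (SmashD K N q) (LaurentModule N S)}

theorem single_mem_of_single_mem {a : Fin N → ℤ} {s : S} (h : single a s ∈ p) (b : Fin N → ℤ) :
    single b s ∈ p := by
  simpa [Xpow_smul_single] using p.smul_mem (Xpow K q (b - a) : SmashD K N q) h

theorem exists_mem_card_support_lt (hq : Function.Injective fun n : ℤ => q ^ n)
    {m : LaurentModule N S} (hm : m ∈ p) (hcard : 1 < m.support.card) :
    ∃ m' ∈ p, m' ≠ 0 ∧ m'.support.card < m.support.card := by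
  obtain ⟨a, ha, b, hb, hab⟩ := Finset.one_lt_card.mp hcard
  obtain ⟨i, hi⟩ := Function.ne_iff.mp hab
  -- `Y_i - q^{b_i}` kills the `b`-coefficient of `m` but not its `a`-coefficient.
  set m' := Ye K q i • m - ((q ^ b i : Kˣ) : K) • m
  have hm' (x : Fin N → ℤ) : m' x = (((q ^ x i : Kˣ) : K) - (q ^ b i : Kˣ)) • m x := by
    rw [Finsupp.sub_apply, Ye_smul_apply, Finsupp.smul_apply, sub_smul]
  have hsupp : m'.support ⊆ m.support.erase b := by
    intro x hx
    rw [mem_support_iff, hm'] at hx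
    refine Finset.mem_erase.2 ⟨fun hxb => ?_, mem_support_iff.2 (right_ne_zero_of_smul hx)⟩
    rw [hxb, sub_self, zero_smul] at hx
    exact hx rfl
  refine ⟨m', p.sub_mem (p.smul_mem _ hm) (p.smul_of_tower_mem _ hm), fun h0 => ?_, ?_⟩
  · have := congrArg (· a) h0
    simp only [hm', coe_zero, Pi.zero_apply, smul_eq_zero, sub_eq_zero] at this
    exact this.elim (fun h => hi (hq (Units.val_injective h))) (mem_support_iff.1 ha)
  · exact (Finset.card_le_card hsupp).trans_lt (Finset.card_erase_lt_of_mem hb)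

theorem exists_single_mem (hq : Function.Injective fun n : ℤ => q ^ n)
    {m : LaurentModule N S} (hm : m ∈ p) (hm0 : m ≠ 0) :
    ∃ a s, s ≠ 0 ∧ single a s ∈ p := by
  induction hn : m.support.card using Nat.strong_induction_on generalizing m with
  | _ n ih =>
    rcases lt_trichotomy n 1 with hlt | rfl | hgt
    · exact absurd (support_eq_empty.1 (Finset.card_eq_zero.1 (by omega))) hm0
    · obtain ⟨a, ha, hma⟩ := card_support_eq_one.1 hn
      exact ⟨a, m a, ha, hma ▸ hm⟩
    · obtain ⟨m', hm'p, hm'0, hlt⟩ := exists_mem_card_support_lt hq hm (hn ▸ hgt)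
      exact ih _ (hn ▸ hlt) hm'p hm'0 rfl

theorem eq_top_of_single_mem
    (hS : IsPermIrreducible K N S)
    {a : Fin N → ℤ} {s : S} (hs : s ≠ 0) (h : single a s ∈ p) : p = ⊤ := by
  set S₀ := (p.restrictScalars K).comap (lsingle 0)
  have hS₀ : S₀ = ⊤ := by
    refine (hS S₀ fun w t ht => ?_).resolve_left fun hbot => hs ?_
    · simpa [S₀, Se_smul_single] using p.smul_mem (Se K q w) ht
    · have : s ∈ S₀ := single_mem_of_single_mem h 0
      simpa [hbot] using this
  refine Submodule.eq_top_iff'.2 fun m => ?_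
  induction m using Finsupp.induction_linear with
  | zero => exact p.zero_mem
  | add m m' hm hm' => exact p.add_mem hm hm'
  | single b t => exact single_mem_of_single_mem (show t ∈ S₀ from hS₀ ▸ trivial) b

theorem isSimpleModule_laurentModule [Nontrivial S] (hq : Function.Injective fun n : ℤ => q ^ n)
    (hS : IsPermIrreducible K N S) :
    IsSimpleModule (SmashD K N q) (LaurentModule N S) :=
  (isSimpleModule_iff _ _).2 ⟨fun p => or_iff_not_imp_left.2 fun hp => by
    obtain ⟨m, hm, hm0⟩ := p.ne_bot_iff.1 hp
    obtain ⟨a, s, hs, h⟩ := exists_single_mem hq hm hm0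
    exact eq_top_of_single_mem hS hs h⟩

theorem isSimpleModule_inducedModule [Nontrivial S] (hq : Function.Injective fun n : ℤ => q ^ n)
    (hS : IsPermIrreducible K N S) :
    IsSimpleModule (SmashD K N q) (InducedModule K N q S) :=
  have := isSimpleModule_laurentModule hq hS
  IsSimpleModule.congr (inducedEquivLaurent K N q S)

end LaurentModule

end SmashD

theorem statement12_general (K : Type) [Field K] (N : ℕ)
    (q : Kˣ) (hq : ∀ m : ℕ, m ≠ 0 → (q : K) ^ m ≠ 1)
    (S : Type) [AddCommGroup S] [Module K S]
    [DistribMulAction (Equiv.Perm (Fin N)) S]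
    [SMulCommClass (Equiv.Perm (Fin N)) K S]
    (hS0 : Nontrivial S)
    (hSsimple : ∀ p : Submodule K S,
      (∀ (w : Equiv.Perm (Fin N)) (x : S), x ∈ p → w • x ∈ p) → p = ⊥ ∨ p = ⊤) :
    IsSimpleModule (SmashD K N q)
      (@HasQuotient.Quotient _ _ (@Submodule.hasQuotient (SmashD K N q) (SmashD K N q ⊗[K] S) _ _ _)
        (indRel K N q S)) := by
  have := hS0
  exact SmashD.isSimpleModule_inducedModule (zpow_injective_of_pow_ne_one hq) hSsimple

theorem statement12 (K : Type) [Field K] [CharZero K] (N : ℕ) (hN : 1 ≤ N)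
    (q : Kˣ) (hq : ∀ m : ℕ, m ≠ 0 → (q : K) ^ m ≠ 1)
    (S : Type) [AddCommGroup S] [Module K S]
    [DistribMulAction (Equiv.Perm (Fin N)) S]
    [SMulCommClass (Equiv.Perm (Fin N)) K S]
    (hS0 : Nontrivial S)
    (hSsimple : ∀ p : Submodule K S,
      (∀ (w : Equiv.Perm (Fin N)) (x : S), x ∈ p → w • x ∈ p) → p = ⊥ ∨ p = ⊤) :
    IsSimpleModule (SmashD K N q)
      (@HasQuotient.Quotient _ _ (@Submodule.hasQuotient (SmashD K N q) (SmashD K N q ⊗[K] S) _ _ _)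
        (indRel K N q S)) :=
  statement12_general K N q hq S hS0 hSsimple

end
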